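/- Let Gr(n,n) be the manifold of n-dimensional subspaces of ℂ^{2n}, identified with the set of grading operators F = 2P − 1 where P is a rank-n orthogonal projection, so F is a symmetry (F² = 1). On this manifold, the even-degree forms ω_{2j} = tr(F (dF)^{2j}) are closed for every j ≥ 1. -/
import Mathlib


/-!
STATEMENT 5: On the Grassmannian `Gr(n,n)`, parametrised by grading operators
`F = 2P - 1` with `F² = 1`, the even forms `ω_{2j} = tr (F (dF)^{2j})` are
closed for every `j ≥ 1`.  We work in the graded algebra `B` of matrix-valued
forms on the Grassmannian (grading `deg`, differential `dB` with `dB² = 0` and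
graded Leibniz rule), scalar forms `Ω` with differential `dΩ`, and the
coefficient-wise matrix trace `T : B → Ω`, which is graded-cyclic and
commutes with the differentials.  `F` is the (degree-0) tautological grading
operator with `F² = 1`. -/

theorem stmt5 {Ω B : Type*} [AddCommGroup Ω] [Module ℂ Ω] [Ring B] [Algebra ℂ B]
    (deg : ℕ → Submodule ℂ B)
    (hone : (1 : B) ∈ deg 0)
    (hdegmul : ∀ (m n : ℕ), ∀ x ∈ deg m, ∀ y ∈ deg n, x * y ∈ deg (m + n))
    (dΩ : Ω →ₗ[ℂ] Ω) (dB : B →ₗ[ℂ] B) (T : B →ₗ[ℂ] Ω)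
    (hd2 : ∀ x : B, dB (dB x) = 0)
    (hddeg : ∀ (m : ℕ), ∀ x ∈ deg m, dB x ∈ deg (m + 1))
    (hleib : ∀ (m : ℕ), ∀ x ∈ deg m, ∀ y : B,
      dB (x * y) = dB x * y + ((-1 : ℂ) ^ m) • (x * dB y))
    (hcyc : ∀ (m n : ℕ), ∀ x ∈ deg m, ∀ y ∈ deg n,
      T (x * y) = ((-1 : ℂ) ^ (m * n)) • T (y * x))
    (hdT : ∀ x : B, dΩ (T x) = T (dB x))
    (F : B) (hF : F ∈ deg 0) (hF2 : F * F = 1)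
    (j : ℕ) (hj : 1 ≤ j) :
    dΩ (T (F * (dB F) ^ (2 * j))) = 0 := by
  set A := dB F with hA
  have hAdeg : A ∈ deg 1 := hddeg 0 F hF
  -- dB 1 = 0
  have hd1 : dB (1 : B) = 0 := by
    have := hleib 0 1 hone 1
    simp at this
    exact this
  -- powers of A have right degree
  have hApow : ∀ k : ℕ, A ^ k ∈ deg k := by
    intro k
    induction k with
    | zero => simpa using hone
    | succ n ih =>
      simpa [pow_succ] using hdegmul n 1 (A ^ n) ih A hAdeg
  -- dB (A^k) = 0
  have hdApow : ∀ k : ℕ, dB (A ^ k) = 0 := by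
    intro k
    induction k with
    | zero => simpa using hd1
    | succ n ih =>
      have : dB (A * A ^ n) = dB A * A ^ n + ((-1 : ℂ) ^ 1) • (A * dB (A ^ n)) :=
        hleib 1 A hAdeg (A ^ n)
      rw [pow_succ', this, ih, hd2]
      simp
  -- F anticommutes with A
  have hanti : F * A = -(A * F) := by
    have h := hleib 0 F hF F
    rw [hF2, hd1] at h
    simp at h
    linear_combination (norm := noncomm_ring) -h
  -- F * A^k = (-1)^k • (A^k * F)
  have hFA : ∀ k : ℕ, F * A ^ k = ((-1 : ℂ) ^ k) • (A ^ k * F) := by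
    intro k
    induction k with
    | zero => simp
    | succ n ih =>
      rw [pow_succ, pow_succ, ← mul_assoc]
      calc F * A ^ n * A = (((-1 : ℂ) ^ n) • (A ^ n * F)) * A := by rw [ih]
        _ = ((-1 : ℂ) ^ n) • (A ^ n * (F * A)) := by
            rw [smul_mul_assoc, mul_assoc]
        _ = ((-1 : ℂ) ^ n) • (A ^ n * (-(A * F))) := by rw [hanti]
        _ = ((-1 : ℂ) ^ (n + 1)) • (A ^ n * A * F) := by
            rw [pow_succ]
            simp [mul_assoc, mul_smul, smul_smul, mul_comm]
  -- d(F A^{2j}) = A^{2j+1}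
  have hkey : dB (F * A ^ (2 * j)) = A ^ (2 * j + 1) := by
    have := hleib 0 F hF (A ^ (2 * j))
    rw [this, hdApow]
    rw [mul_zero, smul_zero, add_zero, ← hA, ← pow_succ']
  rw [hdT, hkey]
  -- T (A^{2j+1}) = 0
  have hodd : F * A ^ (2 * j + 1) = -(A ^ (2 * j + 1) * F) := by
    rw [hFA (2 * j + 1)]
    simp [pow_succ, pow_mul]
  have hcy : T (F * (A ^ (2 * j + 1) * F)) = T (A ^ (2 * j + 1) * F * F) := by
    have hm : A ^ (2 * j + 1) * F ∈ deg (2 * j + 1) := by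
      simpa using hdegmul (2 * j + 1) 0 _ (hApow _) F hF
    have := hcyc 0 (2 * j + 1) F hF _ hm
    simpa [mul_assoc] using this
  have : T (A ^ (2 * j + 1)) = -T (A ^ (2 * j + 1)) := by
    calc T (A ^ (2 * j + 1)) = T (F * (F * A ^ (2 * j + 1))) := by
          rw [← mul_assoc, hF2, one_mul]
      _ = T (F * (-(A ^ (2 * j + 1) * F))) := by rw [hodd]
      _ = -T (F * (A ^ (2 * j + 1) * F)) := by rw [mul_neg, map_neg]
      _ = -T (A ^ (2 * j + 1) * F * F) := by rw [hcy]
      _ = -T (A ^ (2 * j + 1)) := by rw [mul_assoc, hF2, mul_one]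
  have h2 : (2 : ℂ) • T (A ^ (2 * j + 1)) = 0 := by
    rw [two_smul]
    exact add_eq_zero_iff_eq_neg.mpr this
  have h3 := congrArg (fun y => (2 : ℂ)⁻¹ • y) h2
  simp only [smul_smul, smul_zero] at h3
  norm_num at h3
  exact h3
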